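/- arXiv:2605.09503 — 4 statements merged into one kernel-verified Lean document; each statement's English description precedes it below -/
import Mathlib

section
/- Let g, K be positive integers, d = K·g, and let a : Fin d → ℝ be antitone (i.e., i ≤ j implies a i ≥ a j, so a is sorted in descending order). Let f : Fin d → Fin K be any grouping whose fibers all have cardinality g, and for each group k' let m_{k'} = max_{i ∈ f⁻¹(k')} a i. Then for every k with 1 ≤ k ≤ K, at least k of the groups have maximum at least a((k−1)·g), i.e., the set { k' : m_{k'} ≥ a((k−1)·g) } has cardinality at least k. -/
open Finset

/-- For an antitone (descending) vector `a : Fin d → ℝ` with `d = K·g` and any grouping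
`f` whose fibers all have cardinality `g`, for every `1 ≤ k ≤ K` at least `k` of the
group maxima `m_{k'} = max_{i ∈ f⁻¹(k')} a i` are at least `a((k−1)·g)`. -/
theorem at_least_k_group_maxima_large
    (g K : ℕ) (hg : 0 < g) (hK : 0 < K) (d : ℕ) (hd : d = K * g)
    (a : Fin d → ℝ) (ha : Antitone a)
    (f : Fin d → Fin K)
    (hfib : ∀ k' : Fin K, (Finset.univ.filter fun i => f i = k').card = g)
    (k : ℕ) (hk1 : 1 ≤ k) (hkK : k ≤ K) :
    k ≤ (Finset.univ.filter fun k' : Fin K =>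
        a ⟨(k - 1) * g, by
            calc (k - 1) * g < K * g := mul_lt_mul_of_pos_right (by omega) hg
              _ = d := hd.symm⟩ ≤
          (Finset.univ.filter fun i => f i = k').sup'
            (Finset.card_pos.mp (by rw [hfib k']; exact hg)) a).card := by
  set t : Fin d := ⟨(k - 1) * g, by
      calc (k - 1) * g < K * g := mul_lt_mul_of_pos_right (by omega) hg
        _ = d := hd.symm⟩ with ht
  set S : Finset (Fin d) := Finset.univ.filter fun i => i ≤ t with hS
  have hScard : S.card = (k - 1) * g + 1 := by
    have : S = Finset.Iic t := by
      ext i; simp [hS]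
    rw [this, Fin.card_Iic]
  set T : Finset (Fin K) := S.image f with hT
  -- each group in T has max ≥ a t
  have hsub : T ⊆ Finset.univ.filter fun k' : Fin K =>
      a t ≤ (Finset.univ.filter fun i => f i = k').sup'
        (Finset.card_pos.mp (by rw [hfib k']; exact hg)) a := by
    intro k' hk'
    simp only [hT, mem_image] at hk'
    obtain ⟨i, hi, hfi⟩ := hk'
    simp only [hS, mem_filter, mem_univ, true_and] at hi
    refine mem_filter.mpr ⟨mem_univ _, le_trans (ha hi) ?_⟩
    exact le_sup' a (by simp [hfi])
  -- S ⊆ union of fibers over T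
  have hcover : S ⊆ T.biUnion fun k' => Finset.univ.filter fun i => f i = k' := by
    intro i hi
    exact mem_biUnion.mpr ⟨f i, mem_image_of_mem f hi, by simp⟩
  have hle : S.card ≤ T.card * g := by
    calc S.card ≤ (T.biUnion fun k' => Finset.univ.filter fun i => f i = k').card :=
          card_le_card hcover
      _ ≤ ∑ k' ∈ T, (Finset.univ.filter fun i => f i = k').card := card_biUnion_le
      _ = T.card * g := by simp [hfib, mul_comm]
  have hkT : k ≤ T.card := by
    by_contra h
    push_neg at h
    have : T.card * g ≤ (k - 1) * g := Nat.mul_le_mul_right g (by omega)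
    omega
  exact le_trans hkT (card_le_card hsub)
end

section
/- (Optimality of second-moment sorting.) Let g, K be positive integers, d = K·g, and let a : Fin d → ℝ be antitone (sorted in descending order). Define the sorted-contiguous grouping f₀ : Fin d → Fin K by f₀(i) = ⌊i/g⌋, so that group k consists of the indices {k·g, k·g+1, …, k·g + g − 1}. Then: (1) Σ_{k=0}^{K−1} max_{i ∈ f₀⁻¹(k)} a i = Σ_{k=0}^{K−1} a(k·g); and (2) for every grouping f : Fin d → Fin K whose fibers all have cardinality g, Σ_{k=0}^{K−1} max_{i ∈ f⁻¹(k)} a i ≥ Σ_{k=0}^{K−1} a(k·g). Hence the sorted-contiguous grouping minimizes Σ_k max_{i ∈ G_k} a i over all groupings with equal fiber size g. -/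
open Finset

/-- The fiber (group) of a grouping function `f : Fin d → Fin K` over group `k`. -/
def qFiber {d K : ℕ} (f : Fin d → Fin K) (k : Fin K) : Finset (Fin d) :=
  Finset.univ.filter fun i => f i = k

/-- The sorted-contiguous grouping `f₀(i) = ⌊i/g⌋` on `Fin d` with `d = K·g`. -/
def sortedGrouping (g K d : ℕ) (hg : 0 < g) (hd : d = K * g) (i : Fin d) : Fin K :=
  ⟨i.val / g, (Nat.div_lt_iff_lt_mul hg).mpr (by have := i.isLt; omega)⟩

/-- The index `k·g`, the first index of group `k` in the sorted-contiguous grouping. -/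
def headIdx (g K d : ℕ) (hg : 0 < g) (hd : d = K * g) (k : Fin K) : Fin d :=
  ⟨k.val * g, by
    have hk := k.isLt
    have h2 : k.val * g < K * g := mul_lt_mul_of_pos_right hk hg
    omega⟩

lemma qFiber_sortedGrouping_nonempty (g K d : ℕ) (hg : 0 < g) (hd : d = K * g)
    (k : Fin K) : (qFiber (sortedGrouping g K d hg hd) k).Nonempty := by
  refine ⟨headIdx g K d hg hd k, ?_⟩
  simp only [qFiber, Finset.mem_filter, Finset.mem_univ, true_and]
  apply Fin.ext
  simp [sortedGrouping, headIdx, Nat.mul_div_cancel _ hg]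

/-- Optimality of second-moment sorting: for an antitone `a : Fin d → ℝ` with `d = K·g`,
(1) the sorted-contiguous grouping `f₀(i) = ⌊i/g⌋` has `Σ_k max_{i ∈ f₀⁻¹(k)} a i = Σ_k a(k·g)`,
and (2) every grouping `f` with all fibers of cardinality `g` satisfies
`Σ_k max_{i ∈ f⁻¹(k)} a i ≥ Σ_k a(k·g)`; hence `f₀` minimizes `Σ_k max_{i ∈ G_k} a i`. -/
theorem second_moment_sorting_optimal
    (g K : ℕ) (hg : 0 < g) (hK : 0 < K) (d : ℕ) (hd : d = K * g)
    (a : Fin d → ℝ) (ha : Antitone a) :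
    (∑ k : Fin K, (qFiber (sortedGrouping g K d hg hd) k).sup'
        (qFiber_sortedGrouping_nonempty g K d hg hd k) a
      = ∑ k : Fin K, a (headIdx g K d hg hd k))
    ∧ ∀ f : Fin d → Fin K, ∀ hf : (∀ k : Fin K, (qFiber f k).card = g),
        ∑ k : Fin K, a (headIdx g K d hg hd k) ≤
          ∑ k : Fin K, (qFiber f k).sup'
            (Finset.card_pos.mp (by rw [hf k]; exact hg)) a := by
  constructor
  · -- part 1
    refine Finset.sum_congr rfl fun k _ => ?_
    have hmem : headIdx g K d hg hd k ∈ qFiber (sortedGrouping g K d hg hd) k := by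
      simp only [qFiber, Finset.mem_filter, Finset.mem_univ, true_and]
      apply Fin.ext
      simp [sortedGrouping, headIdx, Nat.mul_div_cancel _ hg]
    apply le_antisymm
    · apply Finset.sup'_le
      intro i hi
      apply ha
      simp only [qFiber, Finset.mem_filter, Finset.mem_univ, true_and] at hi
      have hval : i.val / g = k.val := congrArg Fin.val hi
      rw [Fin.le_def]
      show k.val * g ≤ i.val
      calc k.val * g = (i.val / g) * g := by rw [hval]
        _ ≤ i.val := Nat.div_mul_le_self _ _
    · exact Finset.le_sup' a hmem
  · -- part 2
    intro f hf
    have hne : ∀ k : Fin K, (qFiber f k).Nonempty := fun k =>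
      Finset.card_pos.mp (by rw [hf k]; exact hg)
    set m : Fin K → Fin d := fun k => (qFiber f k).min' (hne k) with hm
    have hmmem : ∀ k, m k ∈ qFiber f k := fun k => Finset.min'_mem _ _
    have hfm : ∀ k, f (m k) = k := by
      intro k
      have := hmmem k
      simpa [qFiber] using this
    have hminj : Function.Injective m := by
      intro k k' h
      rw [← hfm k, ← hfm k', h]
    set σ := Tuple.sort m with hσ
    set b : Fin K → Fin d := m ∘ σ with hb
    have hbmono : Monotone b := Tuple.monotone_sort m
    have hbsm : StrictMono b := hbmono.strictMono_of_injective
      (hminj.comp σ.injective)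
    -- key bound : (b k).val ≤ k * g
    have hkey : ∀ k : Fin K, (b k).val ≤ k.val * g := by
      intro k
      have hsub : Finset.Iio (b k) ⊆ (Finset.Iio k).biUnion (fun j => qFiber f (σ j)) := by
        intro i hi
        rw [Finset.mem_Iio] at hi
        rw [Finset.mem_biUnion]
        refine ⟨σ.symm (f i), ?_, ?_⟩
        · rw [Finset.mem_Iio]
          by_contra hle
          push_neg at hle
          have h1 : b k ≤ b (σ.symm (f i)) := hbmono hle
          have h2 : b (σ.symm (f i)) = m (f i) := by simp [hb]
          have h3 : m (f i) ≤ i := Finset.min'_le _ _ (by simp [qFiber])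
          rw [h2] at h1
          exact absurd (lt_of_le_of_lt (le_trans h1 h3) hi) (lt_irrefl _)
        · simp [qFiber]
      have hc1 : (Finset.Iio (b k)).card = (b k).val := Fin.card_Iio _
      have hc2 : ((Finset.Iio k).biUnion (fun j => qFiber f (σ j))).card ≤ k.val * g := by
        calc ((Finset.Iio k).biUnion (fun j => qFiber f (σ j))).card
            ≤ ∑ j ∈ Finset.Iio k, (qFiber f (σ j)).card := Finset.card_biUnion_le
          _ = ∑ j ∈ Finset.Iio k, g := by
              refine Finset.sum_congr rfl fun j _ => hf (σ j)
          _ = k.val * g := by rw [Finset.sum_const, Fin.card_Iio, smul_eq_mul]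
      calc (b k).val = (Finset.Iio (b k)).card := hc1.symm
        _ ≤ _ := Finset.card_le_card hsub
        _ ≤ k.val * g := hc2
    -- reindex the RHS sum by σ
    have hre : ∑ k : Fin K, (qFiber f k).sup' (hne k) a
        = ∑ k : Fin K, (qFiber f (σ k)).sup' (hne (σ k)) a :=
      (Fintype.sum_equiv σ _ _ (fun k => rfl)).symm
    have hterm : ∀ k : Fin K, a (headIdx g K d hg hd k) ≤ (qFiber f (σ k)).sup' (hne (σ k)) a := by
      intro k
      have h1 : a (headIdx g K d hg hd k) ≤ a (b k) := by
        apply ha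
        rw [Fin.le_def]
        simpa [headIdx] using hkey k
      exact le_trans h1 (Finset.le_sup' a (hmmem (σ k)))
    calc ∑ k : Fin K, a (headIdx g K d hg hd k)
        ≤ ∑ k : Fin K, (qFiber f (σ k)).sup' (hne (σ k)) a :=
          Finset.sum_le_sum fun k _ => hterm k
      _ = ∑ k : Fin K, (qFiber f k).sup' (hne k) a := hre.symm
      _ = _ := rfl
end

section
/- (Sandwich bound.) Let g, K, Q be positive integers, d = K·g, C > 0 and let (Ω, 𝔽, ℙ) be a probability space carrying real random variables x_0, …, x_{d−1} with finite second moments μ_i² = 𝔼[x_i²]. Let f : Fin d → Fin K be a grouping whose fibers G_k all have cardinality g, assume each max_{i ∈ G_k} x_i² is integrable, and define ℰ(f) = (g/(12·Q²)) · Σ_k 𝔼[max_{i ∈ G_k} x_i²] and Φ(f) = Σ_k max_{i ∈ G_k} μ_i². If the extremal-control condition 𝔼[max_{i ∈ G_k} x_i²] ≤ C·log₂(2g)·max_{i ∈ G_k} μ_i² holds for every group G_k, then (g/(12·Q²))·Φ(f) ≤ ℰ(f) ≤ (C·g·log₂(2g)/(12·Q²))·Φ(f). -/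
open Finset MeasureTheory Real

lemma qFiber_nonempty {d K g : ℕ} (hg : 0 < g) {f : Fin d → Fin K}
    (hf : ∀ k : Fin K, (qFiber f k).card = g) (k : Fin K) : (qFiber f k).Nonempty :=
  Finset.card_pos.mp (by rw [hf k]; exact hg)

/-- Sandwich bound: under the extremal-control condition, the uniform-noise expected
quantization error `ℰ(f) = (g/(12Q²)) Σ_k 𝔼[max_{i ∈ G_k} x_i²]` satisfies
`(g/(12Q²))·Φ(f) ≤ ℰ(f) ≤ (C·g·log₂(2g)/(12Q²))·Φ(f)`, where
`Φ(f) = Σ_k max_{i ∈ G_k} μ_i²` with `μ_i² = 𝔼[x_i²]`. -/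
theorem sandwich_bound
    (g K Q : ℕ) (hg : 0 < g) (hK : 0 < K) (hQ : 0 < Q)
    (d : ℕ) (hd : d = K * g) (C : ℝ) (hC : 0 < C)
    {Ω : Type*} [MeasurableSpace Ω] (ℙ : Measure Ω) [IsProbabilityMeasure ℙ]
    (x : Fin d → Ω → ℝ)
    (hmeas : ∀ i, Measurable (x i))
    (hsq : ∀ i, Integrable (fun ω => (x i ω) ^ 2) ℙ)
    (f : Fin d → Fin K)
    (hfib : ∀ k : Fin K, (qFiber f k).card = g)
    (hint : ∀ k : Fin K, Integrable (fun ω =>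
      (qFiber f k).sup' (qFiber_nonempty hg hfib k) fun i => (x i ω) ^ 2) ℙ)
    (hext : ∀ k : Fin K,
      (∫ ω, ((qFiber f k).sup' (qFiber_nonempty hg hfib k) fun i => (x i ω) ^ 2) ∂ℙ) ≤
        C * Real.logb 2 (2 * g) *
          (qFiber f k).sup' (qFiber_nonempty hg hfib k) fun i => ∫ ω, (x i ω) ^ 2 ∂ℙ) :
    ((g : ℝ) / (12 * (Q : ℝ) ^ 2)) *
        (∑ k : Fin K,
          (qFiber f k).sup' (qFiber_nonempty hg hfib k) fun i => ∫ ω, (x i ω) ^ 2 ∂ℙ) ≤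
      ((g : ℝ) / (12 * (Q : ℝ) ^ 2)) *
        ∑ k : Fin K,
          ∫ ω, ((qFiber f k).sup' (qFiber_nonempty hg hfib k) fun i => (x i ω) ^ 2) ∂ℙ
    ∧ ((g : ℝ) / (12 * (Q : ℝ) ^ 2)) *
        (∑ k : Fin K,
          ∫ ω, ((qFiber f k).sup' (qFiber_nonempty hg hfib k) fun i => (x i ω) ^ 2) ∂ℙ) ≤
      (C * (g : ℝ) * Real.logb 2 (2 * g) / (12 * (Q : ℝ) ^ 2)) *
        (∑ k : Fin K,
          (qFiber f k).sup' (qFiber_nonempty hg hfib k) fun i => ∫ ω, (x i ω) ^ 2 ∂ℙ) := by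

  have hcoef : (0:ℝ) ≤ (g : ℝ) / (12 * (Q : ℝ) ^ 2) := by positivity
  constructor
  · apply mul_le_mul_of_nonneg_left _ hcoef
    apply Finset.sum_le_sum
    intro k _
    rw [Finset.sup'_le_iff]
    intro i hi
    apply integral_mono (hsq i) (hint k)
    intro ω
    exact Finset.le_sup' (fun j => (x j ω) ^ 2) hi
  · have h1 : ((g : ℝ) / (12 * (Q : ℝ) ^ 2)) *
        (∑ k : Fin K,
          ∫ ω, ((qFiber f k).sup' (qFiber_nonempty hg hfib k) fun i => (x i ω) ^ 2) ∂ℙ)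
        ≤ ((g : ℝ) / (12 * (Q : ℝ) ^ 2)) * (C * Real.logb 2 (2 * g) *
          ∑ k : Fin K,
          (qFiber f k).sup' (qFiber_nonempty hg hfib k) fun i => ∫ ω, (x i ω) ^ 2 ∂ℙ) := by
      apply mul_le_mul_of_nonneg_left _ hcoef
      rw [Finset.mul_sum]
      exact Finset.sum_le_sum fun k _ => hext k
    calc _ ≤ _ := h1
      _ = _ := by ring
end

section
/- Let g, K, Q be positive integers, d = K·g, C > 0, and let (Ω, 𝔽, ℙ) be a probability space carrying a random vector x : Ω → (Fin d → ℝ) with μ_i² = 𝔼[x_i²] finite. Let f : Fin d → Fin K be a grouping whose fibers G_k all have cardinality g, with each max_{i ∈ G_k} x_i² integrable, and suppose the extremal-control condition holds for every group: 𝔼[max_{i ∈ G_k} x_i²] ≤ C·log₂(2g)·max_{i ∈ G_k} μ_i². Suppose x̂ : Ω → (Fin d → ℝ) satisfies, for every ω and i, |x(ω) i − x̂(ω) i| ≤ s_{f(i)}(ω)/2 where s_k(ω) = (max_{i ∈ G_k} |x(ω) i|)/Q. Then 𝔼[Σ_i (x i − x̂ i)²] ≤ (C·g·log₂(2g)/(4·Q²))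 · Σ_k max_{i ∈ G_k} μ_i². -/
open Finset MeasureTheory Real

/-- Under the extremal-control condition, the expected per-group quantization error
satisfies `𝔼[Σ_i (x i − x̂ i)²] ≤ (C·g·log₂(2g)/(4Q²)) · Σ_k max_{i ∈ G_k} μ_i²`,
where `μ_i² = 𝔼[x_i²]` and the per-coordinate error is at most `s_{f(i)}/2` with
`s_k(ω) = (max_{i ∈ G_k} |x(ω) i|)/Q`. -/
theorem expected_error_bound_extremal_control
    (g K Q : ℕ) (hg : 0 < g) (hK : 0 < K) (hQ : 0 < Q)
    (d : ℕ) (hd : d = K * g) (C : ℝ) (hC : 0 < C)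
    {Ω : Type*} [MeasurableSpace Ω] (ℙ : Measure Ω) [IsProbabilityMeasure ℙ]
    (x xhat : Ω → Fin d → ℝ)
    (hx : ∀ i, Measurable fun ω => x ω i)
    (hxhat : ∀ i, Measurable fun ω => xhat ω i)
    (hsq : ∀ i, Integrable (fun ω => (x ω i) ^ 2) ℙ)
    (f : Fin d → Fin K)
    (hfib : ∀ k : Fin K, (qFiber f k).card = g)
    (hint : ∀ k : Fin K, Integrable (fun ω =>
      (qFiber f k).sup' (qFiber_nonempty hg hfib k) fun i => (x ω i) ^ 2) ℙ)
    (hext : ∀ k : Fin K,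
      (∫ ω, ((qFiber f k).sup' (qFiber_nonempty hg hfib k) fun i => (x ω i) ^ 2) ∂ℙ) ≤
        C * Real.logb 2 (2 * g) *
          (qFiber f k).sup' (qFiber_nonempty hg hfib k) fun i => ∫ ω, (x ω i) ^ 2 ∂ℙ)
    (herr : ∀ ω, ∀ i : Fin d, |x ω i - xhat ω i| ≤
      ((qFiber f (f i)).sup' (qFiber_nonempty hg hfib (f i)) fun j => |x ω j|)
        / (Q : ℝ) / 2) :
    (∫ ω, (∑ i, (x ω i - xhat ω i) ^ 2) ∂ℙ) ≤
      (C * (g : ℝ) * Real.logb 2 (2 * g) / (4 * (Q : ℝ) ^ 2)) *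
        ∑ k : Fin K,
          (qFiber f k).sup' (qFiber_nonempty hg hfib k) fun i => ∫ ω, (x ω i) ^ 2 ∂ℙ := by
  have hQ' : (0:ℝ) < (Q:ℝ) := by exact_mod_cast hQ
  have hden : (0:ℝ) < 4 * (Q:ℝ)^2 := by positivity
  have key : ∀ ω, (∑ i, (x ω i - xhat ω i) ^ 2) ≤
      ∑ k : Fin K, (g : ℝ) / (4 * (Q:ℝ)^2) *
        ((qFiber f k).sup' (qFiber_nonempty hg hfib k) fun i => (x ω i) ^ 2) := by
    intro ω
    rw [← Finset.sum_fiberwise Finset.univ f fun i => (x ω i - xhat ω i) ^ 2]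
    apply Finset.sum_le_sum
    intro k _
    have hne := qFiber_nonempty hg hfib k
    have hbound : ∀ i ∈ qFiber f k, (x ω i - xhat ω i) ^ 2 ≤
        ((qFiber f k).sup' hne fun j => (x ω j) ^ 2) / (4 * (Q:ℝ)^2) := by
      intro i hi
      have hfi : f i = k := by
        have := (Finset.mem_filter.mp hi).2
        exact this
      have h1 := herr ω i
      rw [hfi] at h1
      set S := (qFiber f k).sup' hne fun j => |x ω j| with hS
      have hSsq : S ^ 2 ≤ (qFiber f k).sup' hne fun j => (x ω j) ^ 2 := by
        obtain ⟨j, hj, hjeq⟩ := Finset.exists_mem_eq_sup' (α := ℝ) hne (fun j => |x ω j|)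
        rw [hS, hjeq, sq_abs]
        exact Finset.le_sup' (fun j => (x ω j) ^ 2) hj
      calc (x ω i - xhat ω i) ^ 2 = |x ω i - xhat ω i| ^ 2 := (sq_abs _).symm
        _ ≤ (S / (Q:ℝ) / 2) ^ 2 := pow_le_pow_left₀ (abs_nonneg _) h1 2
        _ = S ^ 2 / (4 * (Q:ℝ)^2) := by rw [div_div, div_pow]; congr 1; ring
        _ ≤ _ := by gcongr
    calc ∑ i ∈ Finset.univ.filter (fun i => f i = k), (x ω i - xhat ω i) ^ 2
        ≤ ∑ _i ∈ qFiber f k,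
            ((qFiber f k).sup' hne fun j => (x ω j) ^ 2) / (4 * (Q:ℝ)^2) :=
          Finset.sum_le_sum hbound
      _ = (g : ℝ) / (4 * (Q:ℝ)^2) *
            ((qFiber f k).sup' hne fun j => (x ω j) ^ 2) := by
          rw [Finset.sum_const, hfib k, nsmul_eq_mul]
          ring
  have hInt : Integrable (fun ω => ∑ k : Fin K, (g : ℝ) / (4 * (Q:ℝ)^2) *
      ((qFiber f k).sup' (qFiber_nonempty hg hfib k) fun i => (x ω i) ^ 2)) ℙ :=
    integrable_finset_sum _ fun k _ => (hint k).const_mul _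
  calc (∫ ω, (∑ i, (x ω i - xhat ω i) ^ 2) ∂ℙ)
      ≤ ∫ ω, (∑ k : Fin K, (g : ℝ) / (4 * (Q:ℝ)^2) *
          ((qFiber f k).sup' (qFiber_nonempty hg hfib k) fun i => (x ω i) ^ 2)) ∂ℙ := by
        apply integral_mono_of_nonneg
        · exact ae_of_all _ fun ω => Finset.sum_nonneg fun i _ => sq_nonneg _
        · exact hInt
        · exact ae_of_all _ key
    _ = ∑ k : Fin K, (g : ℝ) / (4 * (Q:ℝ)^2) *
          ∫ ω, ((qFiber f k).sup' (qFiber_nonempty hg hfib k) fun i => (x ω i) ^ 2) ∂ℙ := by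
        rw [integral_finset_sum _ fun k _ => (hint k).const_mul _]
        exact Finset.sum_congr rfl fun k _ => integral_const_mul _ _
    _ ≤ ∑ k : Fin K, (g : ℝ) / (4 * (Q:ℝ)^2) *
          (C * Real.logb 2 (2 * g) *
            (qFiber f k).sup' (qFiber_nonempty hg hfib k) fun i => ∫ ω, (x ω i) ^ 2 ∂ℙ) := by
        apply Finset.sum_le_sum
        intro k _
        exact mul_le_mul_of_nonneg_left (hext k) (by positivity)
    _ = (C * (g : ℝ) * Real.logb 2 (2 * g) / (4 * (Q : ℝ) ^ 2)) *
          ∑ k : Fin K,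
            (qFiber f k).sup' (qFiber_nonempty hg hfib k) fun i => ∫ ω, (x ω i) ^ 2 ∂ℙ := by
        rw [Finset.mul_sum]
        exact Finset.sum_congr rfl fun k _ => by ring
end
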